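/- Let b ∈ ℂ with b ≠ 0. For b1, b2 ∈ ℂ let A1_{b1,b2} denote the ℂ-vector space with basis {L, W, x} equipped with the operations extending W(1,b) by x∘L = x, L∘x = b2·W + x, x∘W = 0, W∘x = b1·W, x∘x = b1²·L − b1b2·W, [x,L] = −b·b2·W, [x,W] = −b·b1·W. Then: (i) A1_{b1,b2} is a Gel'fand-Dorfman bialgebra containing W(1,b) as a subalgebra; (ii) A1_{b1,b2} is equivalent to A1_{b1',b2'} if and only if there exist c2 ∈ ℂ and β ∈ ℂ* with b1 = β·b1' and b2 = β·b2' − c2; (iii) consequently, every A1_{b1,b2} is equivalent to A1_{0,0} or to A1_{1,0}, and A1_{0,0} is not equivalent to A1_{1,0}. -/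
import Mathlib


namespace GDExt

def IsNovikov {M : Type*} [AddCommGroup M] (mul : M → M → M) : Prop :=
  (∀ a b c, mul (mul a b) c - mul a (mul b c) = mul (mul b a) c - mul b (mul a c)) ∧
  ∀ a b c, mul (mul a b) c = mul (mul a c) b

def IsLieBracket {M : Type*} [AddCommGroup M] (br : M → M → M) : Prop :=
  (∀ a, br a a = 0) ∧ ∀ a b c, br a (br b c) = br (br a b) c + br b (br a c)

def IsGD {M : Type*} [AddCommGroup M] (mul br : M → M → M) : Prop :=
  IsNovikov mul ∧ IsLieBracket br ∧
  ∀ a b c, br a (mul b c) - br c (mul b a) + mul (br b a) c - mul (br b c) a - mul b (br a c) = 0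

variable {K : Type*} [Field K]
variable {A V : Type*} [AddCommGroup A] [Module K A] [AddCommGroup V] [Module K V]

/-- First component bilinear product of the unified product `A ♮ V`. -/
def uniMul (circ : A →ₗ[K] A →ₗ[K] A) (lA rA : A →ₗ[K] Module.End K V)
    (lV rV : V →ₗ[K] Module.End K A) (f : V →ₗ[K] V →ₗ[K] A)
    (st : V →ₗ[K] V →ₗ[K] V) : A × V → A × V → A × V :=
  fun p q =>
    (circ p.1 q.1 + lV p.2 q.1 + rV q.2 p.1 + f p.2 q.2,
     st p.2 q.2 + lA p.1 q.2 + rA q.1 p.2)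

/-- Bracket of the unified product `A ♮ V`. -/
def uniBr (brk : A →ₗ[K] A →ₗ[K] A) (tl : V →ₗ[K] A →ₗ[K] V) (tr : V →ₗ[K] A →ₗ[K] A)
    (hm : V →ₗ[K] V →ₗ[K] A) (vbr : V →ₗ[K] V →ₗ[K] V) : A × V → A × V → A × V :=
  fun p q =>
    (brk p.1 q.1 + tr p.2 q.1 - tr q.2 p.1 + hm p.2 q.2,
     vbr p.2 q.2 + tl p.2 q.1 - tl q.2 p.1)

end GDExt

namespace GDExt

/-- Equivalence of GD bialgebra structures on `ℂL ⊕ ℂW ⊕ ℂx` (coordinates `0 ↦ L`,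
`1 ↦ W`, `2 ↦ x`): a GD bialgebra isomorphism restricting to the identity on
`ℂL ⊕ ℂW`. -/
def GDequiv3 (m br m' br' : (Fin 3 → ℂ) → (Fin 3 → ℂ) → (Fin 3 → ℂ)) : Prop :=
  ∃ φ : (Fin 3 → ℂ) ≃ₗ[ℂ] (Fin 3 → ℂ),
    (∀ u v, φ (m u v) = m' (φ u) (φ v)) ∧
    (∀ u v, φ (br u v) = br' (φ u) (φ v)) ∧
    (∀ u : Fin 3 → ℂ, u 2 = 0 → φ u = u)

end GDExt

namespace GDExt

/-- The Novikov product of `A1_{b1,b2}` in the basis `L = e0, W = e1, x = e2`. -/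
def A1mul (b1 b2 : ℂ) : (Fin 3 → ℂ) → (Fin 3 → ℂ) → (Fin 3 → ℂ) :=
  fun u v =>
    ![u 0 * v 0 + b1 ^ 2 * (u 2 * v 2),
      b2 * (u 0 * v 2) + u 1 * v 0 + b1 * (u 1 * v 2) - b1 * b2 * (u 2 * v 2),
      u 0 * v 2 + u 2 * v 0]

/-- The Lie bracket of `A1_{b1,b2}` (for the parameter `b` of `W(1,b)`). -/
def A1br (b b1 b2 : ℂ) : (Fin 3 → ℂ) → (Fin 3 → ℂ) → (Fin 3 → ℂ) :=
  fun u v =>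
    ![0,
      -b * (u 0 * v 1 - u 1 * v 0) - b * b2 * (u 2 * v 0 - u 0 * v 2)
        - b * b1 * (u 2 * v 1 - u 1 * v 2),
      0]


lemma A1_isGD (b b1 b2 : ℂ) : IsGD (A1mul b1 b2) (A1br b b1 b2) := by
  refine ⟨⟨?_, ?_⟩, ⟨?_, ?_⟩, ?_⟩ <;>
    intros <;> funext i <;> fin_cases i <;> simp [A1mul, A1br] <;> ring

def phiMap (c2 β : ℂ) : (Fin 3 → ℂ) →ₗ[ℂ] (Fin 3 → ℂ) where
  toFun := fun u => ![u 0, u 1 + c2 * u 2, β * u 2]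
  map_add' := by intro u v; funext i; fin_cases i <;> simp <;> ring
  map_smul' := by intro r u; funext i; fin_cases i <;> simp <;> ring

lemma phiMap_apply (c2 β : ℂ) (u : Fin 3 → ℂ) :
    phiMap c2 β u = ![u 0, u 1 + c2 * u 2, β * u 2] := rfl

noncomputable def phiEquiv (c2 β : ℂ) (hβ : β ≠ 0) : (Fin 3 → ℂ) ≃ₗ[ℂ] (Fin 3 → ℂ) :=
  LinearEquiv.ofLinear (phiMap c2 β) (phiMap (-(c2 * β⁻¹)) β⁻¹)
    (by apply LinearMap.ext; intro u; funext i; fin_cases i <;>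
        simp [phiMap_apply] <;> field_simp <;> ring)
    (by apply LinearMap.ext; intro u; funext i; fin_cases i <;>
        simp [phiMap_apply] <;> field_simp <;> ring)

lemma phiEquiv_apply (c2 β : ℂ) (hβ : β ≠ 0) (u : Fin 3 → ℂ) :
    phiEquiv c2 β hβ u = ![u 0, u 1 + c2 * u 2, β * u 2] := rfl

lemma equiv_of (b b1' b2' c2 β : ℂ) (hβ : β ≠ 0) :
    GDequiv3 (A1mul (β * b1') (β * b2' - c2)) (A1br b (β * b1') (β * b2' - c2))
      (A1mul b1' b2') (A1br b b1' b2') := by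
  refine ⟨phiEquiv c2 β hβ, ?_, ?_, ?_⟩
  · intro u v; funext i; fin_cases i <;>
      simp [phiEquiv_apply, A1mul] <;> ring
  · intro u v; funext i; fin_cases i <;>
      simp [phiEquiv_apply, A1br] <;> ring
  · intro u hu; funext i; fin_cases i <;> simp [phiEquiv_apply, hu]

lemma equiv_nec (b : ℂ) (hb : b ≠ 0) (b1 b2 b1' b2' : ℂ)
    (h : GDequiv3 (A1mul b1 b2) (A1br b b1 b2) (A1mul b1' b2') (A1br b b1' b2')) :
    ∃ c2 β : ℂ, β ≠ 0 ∧ b1 = β * b1' ∧ b2 = β * b2' - c2 := by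
  obtain ⟨φ, hm, hbr, hid⟩ := h
  set e0 : Fin 3 → ℂ := ![1, 0, 0] with he0
  set e1 : Fin 3 → ℂ := ![0, 1, 0] with he1
  set e2 : Fin 3 → ℂ := ![0, 0, 1] with he2
  set E : Fin 3 → ℂ := φ e2 with hE
  have hβ : E 2 ≠ 0 := by
    intro h0
    have h1 : φ E = φ e2 := by rw [hid E h0, hE]
    have h2 : E = e2 := φ.injective h1
    rw [h2] at h0
    simp [he2] at h0
  have key : A1mul b1 b2 e2 e2 = ![b1 ^ 2, -(b1 * b2), 0] := by
    funext i; fin_cases i <;> simp [A1mul, he2] <;> ring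
  have h22 := hm e2 e2
  rw [key, hid _ (by simp)] at h22
  have hc10 := congrFun h22 2
  simp [A1mul, ← hE] at hc10
  have hc1 : E 0 = 0 := by
    have h2' : E 2 * (E 0 * 2) = 0 := by linear_combination -hc10
    rcases mul_eq_zero.mp h2' with h | h
    · exact absurd h hβ
    · exact (mul_eq_zero.mp h).resolve_right two_ne_zero
  have key2 : A1br b b1 b2 e2 e1 = ![0, -(b * b1), 0] := by
    funext i; fin_cases i <;> simp [A1br, he1, he2] <;> ring
  have h21 := hbr e2 e1
  rw [key2, hid _ (by simp), hid e1 (by simp [he1])] at h21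
  have hb1 := congrFun h21 1
  simp [A1br, he1, ← hE, hc1] at hb1
  have key3 : A1mul b1 b2 e0 e2 = b2 • e1 + e2 := by
    funext i; fin_cases i <;> simp [A1mul, he0, he1, he2]
  have h02 := hm e0 e2
  rw [key3, map_add, map_smul, hid e1 (by simp [he1]), hid e0 (by simp [he0])] at h02
  have hb2 := congrFun h02 1
  simp [A1mul, he0, he1, ← hE] at hb2
  refine ⟨E 1, E 2, hβ, ?_, ?_⟩
  · exact mul_left_cancel₀ hb (show b * b1 = b * (E 2 * b1') by linear_combination hb1)
  · linear_combination hb2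

/-- Case A1. -/
theorem caseA1 (b : ℂ) (hb : b ≠ 0) :
    -- (i) A1_{b1,b2} is a GD bialgebra containing W(1,b) as a subalgebra
    (∀ b1 b2 : ℂ, IsGD (A1mul b1 b2) (A1br b b1 b2) ∧
      ∀ u v : Fin 3 → ℂ, u 2 = 0 → v 2 = 0 →
        A1mul b1 b2 u v = ![u 0 * v 0, u 1 * v 0, 0] ∧
        A1br b b1 b2 u v = ![0, -b * (u 0 * v 1 - u 1 * v 0), 0]) ∧
    -- (ii) equivalence criterion
    (∀ b1 b2 b1' b2' : ℂ,
      GDequiv3 (A1mul b1 b2) (A1br b b1 b2) (A1mul b1' b2') (A1br b b1' b2') ↔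
        ∃ c2 β : ℂ, β ≠ 0 ∧ b1 = β * b1' ∧ b2 = β * b2' - c2) ∧
    -- (iii) representatives
    (∀ b1 b2 : ℂ,
      GDequiv3 (A1mul b1 b2) (A1br b b1 b2) (A1mul 0 0) (A1br b 0 0) ∨
      GDequiv3 (A1mul b1 b2) (A1br b b1 b2) (A1mul 1 0) (A1br b 1 0)) ∧
    ¬ GDequiv3 (A1mul 0 0) (A1br b 0 0) (A1mul 1 0) (A1br b 1 0) := by
  have hii : ∀ b1 b2 b1' b2' : ℂ,
      GDequiv3 (A1mul b1 b2) (A1br b b1 b2) (A1mul b1' b2') (A1br b b1' b2') ↔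
        ∃ c2 β : ℂ, β ≠ 0 ∧ b1 = β * b1' ∧ b2 = β * b2' - c2 := by
    intro b1 b2 b1' b2'
    constructor
    · exact equiv_nec b hb b1 b2 b1' b2'
    · rintro ⟨c2, β, hβ, rfl, rfl⟩
      exact equiv_of b b1' b2' c2 β hβ
  refine ⟨?_, hii, ?_, ?_⟩
  · intro b1 b2
    refine ⟨A1_isGD b b1 b2, ?_⟩
    intro u v hu hv
    constructor
    · funext i; fin_cases i <;> simp [A1mul, hu, hv]
    · funext i; fin_cases i <;> simp [A1br, hu, hv]
  · intro b1 b2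
    by_cases hb1 : b1 = 0
    · left
      exact (hii b1 b2 0 0).mpr ⟨-b2, 1, one_ne_zero, by simp [hb1], by ring⟩
    · right
      exact (hii b1 b2 1 0).mpr ⟨-b2, b1, hb1, by ring, by ring⟩
  · intro h
    obtain ⟨c2, β, hβ, h1, h2⟩ := (hii 0 0 1 0).mp h
    simp at h1
    exact hβ h1.symm


end GDExt
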